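/- Let A be an N×k array with entries in the set {1,...,s} (s ≥ 1, k ≥ 1), and let a > b > 0 be real numbers. Then (1/N²)·Σ_{t=1}^{k} Unb_{2,t}(A)·(a−b)^t·b^{k−t} = −((a−b)/s + b)^k + (b^k/N²)·Σ_{1 ≤ r, r̃ ≤ N} (a/b)^{H(A;r,r̃)}, where the last sum ranges over all ordered pairs of row indices (including r = r̃) and H(A;r,r̃) := #{j ∈ {1,...,k} : A_{r,j} = A_{r̃,j}} is the Hamming similarity. (Both sides equal the squared discrete discrepancy DD(A;a,b)².) -/

import Mathlib

open Finset

noncomputable section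

instance {t k : ℕ} : DecidablePred (StrictMono : (Fin t → Fin k) → Prop) := fun f =>
  decidable_of_iff (∀ a b : Fin t, a < b → f a < f b) Iff.rfl

/-- The number of rows of the array `A` whose restriction to the columns
`j 0, …, j (t-1)` equals the tuple `x`. -/
def rowCount {S : Type*} [DecidableEq S] {N k t : ℕ} (A : Fin N → Fin k → S)
    (x : Fin t → S) (j : Fin t → Fin k) : ℕ :=
  (Finset.univ.filter fun i : Fin N => ∀ r, A i (j r) = x r).card

/-- `A` is an orthogonal array with `s` levels and strength `t`. -/
def IsOA {S : Type*} [DecidableEq S] (s t : ℕ) {N k : ℕ} (A : Fin N → Fin k → S) : Prop :=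
  ∀ (x : Fin t → S) (j : Fin t → Fin k), StrictMono j →
    (rowCount A x j : ℝ) = (N : ℝ) / (s : ℝ) ^ t

/-- The `p`-unbalance of strength `t` of `A` (with `s` levels). -/
def Unb {S : Type*} [Fintype S] [DecidableEq S] (s : ℕ) (p : ℝ) (t : ℕ) {N k : ℕ}
    (A : Fin N → Fin k → S) : ℝ :=
  ∑ x : Fin t → S, ∑ j ∈ Finset.univ.filter (fun j : Fin t → Fin k => StrictMono j),
    |(rowCount A x j : ℝ) - (N : ℝ) / (s : ℝ) ^ t| ^ p

/-- The tolerance of strength `t` of `A` (with `s` levels). -/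
def Tol {S : Type*} [DecidableEq S] (s t : ℕ) {N k : ℕ} (A : Fin N → Fin k → S) : ℝ :=
  ⨆ (x : Fin t → S) (j : {j : Fin t → Fin k // StrictMono j}),
    |(rowCount A x j.1 : ℝ) - (N : ℝ) / (s : ℝ) ^ t|

/-- The Hamming similarity between the rows `r` and `r'` of `A`. -/
def Ham {S : Type*} [DecidableEq S] {N k : ℕ} (A : Fin N → Fin k → S) (r r' : Fin N) : ℕ :=
  (Finset.univ.filter fun j : Fin k => A r j = A r' j).card

/-- The matrix `X(A,f)`. -/
def Xmat {S : Type*} {N k : ℕ} (f : S → ℝ) (A : Fin N → Fin k → S) :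
    Matrix (Fin N) (Fin k) ℝ :=
  Matrix.of fun i j => f (A i j) / Real.sqrt (∑ i' : Fin N, f (A i' j) ^ 2)

/-- The absolute deviation of `f` with respect to the uniform measure. -/
def sigma1 {S : Type*} [Fintype S] (s : ℕ) (f : S → ℝ) : ℝ :=
  ⨅ α : ℝ, (∑ x : S, |f x - α|) / s

/-- The typical deviation of `f` with respect to the uniform measure. -/
def sigma2 {S : Type*} [Fintype S] (s : ℕ) (f : S → ℝ) : ℝ :=
  ⨅ α : ℝ, Real.sqrt ((∑ x : S, |f x - α| ^ 2) / s)
end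

/-!
Expanding the square, `Unb₂,ₜ(A) = ∑ n(A,x,j)² - 2 (N/sᵗ) ∑ n(A,x,j) + ∑ (N/sᵗ)²`.
For fixed columns `j`, `∑ₓ n(A,x,j)` is `N` and `∑ₓ n(A,x,j)²` counts the ordered pairs of rows
agreeing on `j`; summing over strictly increasing `j` counts, for each pair `(r, r')`, the
`t`-subsets of the `H(A;r,r')` columns where they agree. Hence
`Unb₂,ₜ(A) = ∑_{r,r'} C(H(A;r,r'), t) - N² C(k,t) / sᵗ`, which vanishes at `t = 0`, and weighting
by `(a-b)ᵗ bᵏ⁻ᵗ` and summing over `t`, the binomial theorem turns a pair into `bᵏ⁻ᴴ aᴴ` and the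
correction into `N² ((a-b)/s + b)ᵏ`.
-/

theorem Finset.sum_sq_card_fiberwise {ι M : Type*} [DecidableEq M] {f : ι → M}
    {s : Finset ι} {t : Finset M} (H : (s : Set ι).MapsTo f t) :
    ∑ b ∈ t, #{a ∈ s | f a = b} ^ 2 = #{p ∈ s ×ˢ s | f p.1 = f p.2} := by
  rw [card_eq_sum_card_fiberwise (f := fun p => f p.1)
    fun p hp => H (mem_product.1 (mem_filter.1 hp).1).1]
  refine sum_congr rfl fun b _ => ?_
  rw [sq, ← card_product, filter_filter, ← filter_product]
  exact congrArg card <| filter_congr fun p _ => by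
    constructor <;> rintro ⟨h₁, h₂⟩ <;> simp_all

theorem card_filter_strictMono_forall_mem {k : ℕ} (D : Finset (Fin k)) (t : ℕ) :
    #{j : Fin t → Fin k | StrictMono j ∧ ∀ u, j u ∈ D} = (#D).choose t := by
  rw [← card_powersetCard t D]
  refine card_bij' (fun j _ => univ.image j)
    (fun T hT => T.orderEmbOfFin (mem_powersetCard.1 hT).2) ?_ ?_ ?_ ?_
  · intro j hj
    simp only [mem_filter, mem_univ, true_and] at hj
    rw [mem_powersetCard, card_image_of_injective _ hj.1.injective, card_univ, Fintype.card_fin]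
    exact ⟨fun x hx => by obtain ⟨u, -, rfl⟩ := mem_image.1 hx; exact hj.2 u, rfl⟩
  · intro T hT
    simp only [mem_filter, mem_univ, true_and]
    exact ⟨(T.orderEmbOfFin _).strictMono,
      fun u => (mem_powersetCard.1 hT).1 (orderEmbOfFin_mem T _ u)⟩
  · intro j hj
    simp only [mem_filter, mem_univ, true_and] at hj
    exact (orderEmbOfFin_unique _ (fun u => mem_image_of_mem j (mem_univ u)) hj.1).symm
  · intro T hT
    rw [← coe_inj, coe_image, coe_univ, Set.image_univ, range_orderEmbOfFin]

theorem card_filter_strictMono (k t : ℕ) : #{j : Fin t → Fin k | StrictMono j} = k.choose t := by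
  simpa using card_filter_strictMono_forall_mem (univ : Finset (Fin k)) t

theorem sum_range_choose_mul_pow_mul_pow {R : Type*} [CommSemiring R] {H k : ℕ} (hH : H ≤ k)
    (c b : R) :
    ∑ t ∈ range (k + 1), (H.choose t : R) * c ^ t * b ^ (k - t) = b ^ (k - H) * (c + b) ^ H := by
  rw [add_pow, mul_sum, ← sum_subset (range_subset_range.2 (Nat.succ_le_succ hH))]
  · refine sum_congr rfl fun t ht => ?_
    rw [show k - t = (k - H) + (H - t) by grind, pow_add]
    ring
  · intro t _ ht
    rw [Nat.choose_eq_zero_of_lt (by simpa using ht), Nat.cast_zero, zero_mul, zero_mul]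

section RowCount

variable {S : Type*} [DecidableEq S] {N k t : ℕ}

theorem rowCount_eq_card_fiber (A : Fin N → Fin k → S) (x : Fin t → S) (j : Fin t → Fin k) :
    rowCount A x j = #{i | (fun u => A i (j u)) = x} := by
  simp only [rowCount, funext_iff]

theorem sum_rowCount [Fintype S] (A : Fin N → Fin k → S) (j : Fin t → Fin k) :
    ∑ x, rowCount A x j = N := by
  simp_rw [rowCount_eq_card_fiber]
  rw [← card_eq_sum_card_fiberwise fun _ _ => mem_coe.2 (mem_univ _), card_univ, Fintype.card_fin]

theorem sum_rowCount_sq [Fintype S] (A : Fin N → Fin k → S) (j : Fin t → Fin k) :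
    ∑ x, rowCount A x j ^ 2 = #{p : Fin N × Fin N | ∀ u, A p.1 (j u) = A p.2 (j u)} := by
  simp_rw [rowCount_eq_card_fiber]
  rw [sum_sq_card_fiberwise fun _ _ => mem_coe.2 (mem_univ _), univ_product_univ]
  simp only [funext_iff]

theorem ham_le (A : Fin N → Fin k → S) (r r' : Fin N) : Ham A r r' ≤ k :=
  (card_filter_le _ _).trans_eq (card_fin k)

end RowCount

section Unbalance

variable {S : Type*} [Fintype S] [DecidableEq S] {N k : ℕ}

theorem sum_sum_rowCount_sq (A : Fin N → Fin k → S) (t : ℕ) :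
    ∑ x : Fin t → S, ∑ j ∈ univ.filter (fun j : Fin t → Fin k => StrictMono j),
      rowCount A x j ^ 2 = ∑ r, ∑ r', (Ham A r r').choose t := by
  rw [sum_comm]
  simp_rw [sum_rowCount_sq]
  refine (sum_card_bipartiteAbove_eq_sum_card_bipartiteBelow (t := univ)
    (r := fun (j : Fin t → Fin k) (p : Fin N × Fin N) => ∀ u, A p.1 (j u) = A p.2 (j u))).trans ?_
  rw [← Fintype.sum_prod_type']
  refine sum_congr rfl fun p _ => ?_
  rw [bipartiteBelow, filter_filter, Ham, ← card_filter_strictMono_forall_mem]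
  simp

theorem unb_two_eq (A : Fin N → Fin k → S) (t : ℕ) :
    Unb (Fintype.card S) 2 t A =
      ∑ r, ∑ r', ((Ham A r r').choose t : ℝ) - N ^ 2 * k.choose t / (Fintype.card S : ℝ) ^ t := by
  set q : ℝ := (Fintype.card S : ℝ) ^ t
  set SM := univ.filter fun j : Fin t → Fin k => StrictMono j
  have hsq : ∑ x, ∑ j ∈ SM, (rowCount A x j : ℝ) ^ 2 = ∑ r, ∑ r', ((Ham A r r').choose t : ℝ) := by
    exact_mod_cast sum_sum_rowCount_sq A t
  have hlin : ∑ x, ∑ j ∈ SM, (rowCount A x j : ℝ) = k.choose t * N := by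
    rw [sum_comm]
    simp_rw [← Nat.cast_sum, sum_rowCount]
    simp [SM, card_filter_strictMono]
  have hconst : ∑ _x : Fin t → S, ∑ _j ∈ SM, (N / q) ^ 2 = q * k.choose t * (N / q) ^ 2 := by
    simp [SM, card_filter_strictMono, q, mul_assoc]
  calc Unb (Fintype.card S) 2 t A
      = ∑ x, ∑ j ∈ SM, ((rowCount A x j : ℝ) ^ 2 - 2 * (N / q) * rowCount A x j + (N / q) ^ 2) := by
        refine sum_congr rfl fun x _ => sum_congr rfl fun j _ => ?_
        rw [Real.rpow_two, sq_abs]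
        ring
    _ = ∑ r, ∑ r', ((Ham A r r').choose t : ℝ) - 2 * (N / q) * (k.choose t * N)
          + q * k.choose t * (N / q) ^ 2 := by
        simp only [sum_add_distrib, sum_sub_distrib, ← mul_sum, hsq, hlin, hconst]
    _ = _ := by
        -- `q = 0` exactly when `S` is empty and `t > 0`; then `N / q = 0` on both sides
        rcases eq_or_ne q 0 with hq | hq
        · simp [hq]
        · field_simp
          ring

end Unbalance

theorem sum_unb_two_mul_pow {S : Type*} [Fintype S] [DecidableEq S] {N k : ℕ}
    (A : Fin N → Fin k → S) (c b : ℝ) :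
    ∑ t ∈ range (k + 1), Unb (Fintype.card S) 2 t A * c ^ t * b ^ (k - t) =
      ∑ r, ∑ r', b ^ (k - Ham A r r') * (c + b) ^ Ham A r r'
        - N ^ 2 * (c / Fintype.card S + b) ^ k := by
  simp_rw [unb_two_eq, sub_mul, sum_sub_distrib]
  congr 1
  · simp_rw [sum_mul]
    rw [sum_comm]
    refine sum_congr rfl fun r _ => ?_
    rw [sum_comm]
    exact sum_congr rfl fun r' _ => sum_range_choose_mul_pow_mul_pow (ham_le A r r') c b
  · have binomial := sum_range_choose_mul_pow_mul_pow (le_refl k) (c / Fintype.card S) b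
    rw [Nat.sub_self, pow_zero, one_mul] at binomial
    rw [← binomial, mul_sum]
    refine sum_congr rfl fun t _ => ?_
    rw [div_pow]
    ring

theorem statement13_general {s N k : ℕ} (hN : 0 < N)
    {a b : ℝ} (hb : 0 < b)
    (A : Fin N → Fin k → Fin s) :
    (1 / (N : ℝ) ^ 2) * ∑ t ∈ Finset.Icc 1 k, Unb s 2 t A * (a - b) ^ t * b ^ (k - t) =
      -(((a - b) / (s : ℝ) + b) ^ k) +
        ((b ^ k) / (N : ℝ) ^ 2) * ∑ r : Fin N, ∑ r' : Fin N, (a / b) ^ (Ham A r r') := by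
  have unb_zero : Unb s 2 0 A = 0 := by
    simpa [sq] using unb_two_eq A 0
  have generating_sum := sum_unb_two_mul_pow A (a - b) b
  rw [Fintype.card_fin, range_eq_Ico, sum_eq_sum_Ico_succ_bot (by positivity), zero_add,
    Ico_add_one_right_eq_Icc, unb_zero, zero_mul, zero_mul, zero_add, sub_add_cancel]
    at generating_sum
  have rescale (r r' : Fin N) :
      b ^ (k - Ham A r r') * a ^ Ham A r r' = b ^ k * (a / b) ^ Ham A r r' := by
    rw [div_pow, ← pow_sub_mul_pow b (ham_le A r r')]
    field_simp
  simp_rw [generating_sum, rescale, ← mul_sum]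
  field_simp
  ring

/-- Identity between the generating sum of the `2`-unbalances of all strengths and the
Hamming-similarity sum (both sides equal the squared discrete discrepancy `DD(A;a,b)²`). -/
theorem statement13 {s N k : ℕ} (hs : 1 ≤ s) (hk : 1 ≤ k) (hN : 0 < N)
    {a b : ℝ} (hb : 0 < b) (hab : b < a)
    (A : Fin N → Fin k → Fin s) :
    (1 / (N : ℝ) ^ 2) * ∑ t ∈ Finset.Icc 1 k, Unb s 2 t A * (a - b) ^ t * b ^ (k - t) =
      -(((a - b) / (s : ℝ) + b) ^ k) +
        ((b ^ k) / (N : ℝ) ^ 2) * ∑ r : Fin N, ∑ r' : Fin N, (a / b) ^ (Ham A r r') :=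
  statement13_general hN hb A
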